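/- There exist constants c₁, c₂ > 0 such that the following holds. For every n ≥ 2, every finite simple graph G on at most n vertices, every subset S of the vertices of G, and every real x ≥ 1, there exists a cluster collection C₁,…,C_p in G with every C_i ⊆ S, with Steiner radius ⌈c₁·x·(log₂ n)²⌉ and congestion ⌈c₂·log₂ n⌉, such that |C₁ ∪ … ∪ C_p| ≥ (1 − 1/x)·|S| and dist_G(C_i, C_j) > 1 for all 1 ≤ i ≠ j ≤ p (i.e., no two distinct clusters are adjacent or intersecting). -/

import Mathlib

open SimpleGraph

/-- `FarApart G k A B` : the `G`-distance between the vertex sets `A` and `B` is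
strictly greater than `k`, i.e. every walk between a vertex of `A` and a vertex of `B`
has length greater than `k`. -/
def FarApart {V : Type} (G : SimpleGraph V) (k : ℕ) (A B : Set V) : Prop :=
  ∀ u ∈ A, ∀ v ∈ B, ∀ p : G.Walk u v, k < p.length

/-- A cluster collection with Steiner radius `β` and congestion `κ` in `G`:
pairwise disjoint clusters, each contained in an associated connected Steiner subgraph
in which any two vertices are joined by a path of length at most `β`, and every edge of
`G` lies in at most `κ` of the Steiner subgraphs. -/
structure ClusterCollection {V : Type} (G : SimpleGraph V) (β κ : ℕ) where
  p : ℕ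
  cluster : Fin p → Set V
  tree : Fin p → G.Subgraph
  disjoint : ∀ i j, i ≠ j → Disjoint (cluster i) (cluster j)
  subset_tree : ∀ i, cluster i ⊆ (tree i).verts
  connected : ∀ i, ((tree i).coe).Preconnected
  radius : ∀ i, ∀ u v : (tree i).verts, ∃ w : ((tree i).coe).Walk u v, w.length ≤ β
  congestion : ∀ e ∈ G.edgeSet, {i : Fin p | e ∈ (tree i).edgeSet}.ncard ≤ κ

/-!
Ball carving. In the part `R` of the graph not yet carved, pick `v ∈ S ∩ R` and grow the balls
`B₀ ⊆ B₁ ⊆ ⋯` around `v` inside `R`. Since `(1 + 1/x)^t > n ≥ |V|` for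
`t = ⌈x⌉ (⌊log₂ n⌋ + 1) ≤ 4 x (log₂ n)²`, the sizes `|S ∩ B_k|` cannot grow by a factor `1 + 1/x`
at every step `k < t`: some radius `r < t` has `|S ∩ B_{r+1}| ≤ (1 + 1/x) |S ∩ B_r|`. Carve the
cluster `S ∩ B_r`, whose Steiner tree is the subgraph induced on `B_r` (diameter `≤ 2r < 2t`),
remove `B_{r+1}` from `R` and recurse.
All neighbours of `B_r` in `R` lie in `B_{r+1}`, so later clusters are neither adjacent to nor
intersect `S ∩ B_r`; the trees are vertex-disjoint, so the congestion is `1`; and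
`(1 - 1/x) |S ∩ B_{r+1}| ≤ (1 - 1/x²) |S ∩ B_r|`, so each step keeps the coverage ratio.
-/

section BallCarving

variable {V : Type} {G : SimpleGraph V}

theorem FarApart.symm {k : ℕ} {A B : Set V} (h : FarApart G k A B) : FarApart G k B A :=
  fun u hu v hv p => by simpa using h v hv u hu p.reverse

theorem farApart_one_iff {A B : Set V} :
    FarApart G 1 A B ↔ Disjoint A B ∧ ∀ a ∈ A, ∀ b ∈ B, ¬G.Adj a b := by
  refine ⟨fun h => ⟨Set.disjoint_left.2 fun a ha hb => by simpa using h a ha a hb .nil,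
    fun a ha b hb hab => by simpa using h a ha b hb hab.toWalk⟩, ?_⟩
  rintro ⟨hdisj, hnadj⟩ a ha b hb (_ | ⟨hab, _ | ⟨_, _⟩⟩)
  · exact absurd hb (Set.disjoint_left.1 hdisj ha)
  · exact absurd hab (hnadj a ha b hb)
  · simp

theorem Fin.pairwise_cons_of_symm {α : Type*} {r : α → α → Prop} (hr : ∀ ⦃x y⦄, r x y → r y x)
    {n : ℕ} {a : α} {f : Fin n → α} (ha : ∀ i, r a (f i))
    (hf : Pairwise fun i j => r (f i) (f j)) :
    Pairwise fun i j => r ((Fin.cons a f : Fin (n + 1) → α) i)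
      ((Fin.cons a f : Fin (n + 1) → α) j) := by
  intro i j hij
  cases i using Fin.cases <;> cases j using Fin.cases
  · exact absurd rfl hij
  · exact ha _
  · exact hr (ha _)
  · exact hf (fun h => hij (congrArg Fin.succ h))

namespace SimpleGraph

def ballWithin (G : SimpleGraph V) (R : Set V) (v : V) : ℕ → Set V
  | 0 => {v}
  | k + 1 => G.ballWithin R v k ∪ {u ∈ R | ∃ w ∈ G.ballWithin R v k, G.Adj w u}

variable {R : Set V} {v : V}

theorem ballWithin_mono : Monotone (G.ballWithin R v) :=
  monotone_nat_of_le_succ fun _ => Set.subset_union_left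

theorem mem_ballWithin_self (k : ℕ) : v ∈ G.ballWithin R v k :=
  ballWithin_mono k.zero_le rfl

theorem mem_ballWithin_succ_of_adj {k : ℕ} {u w : V} (hu : u ∈ G.ballWithin R v k) (hw : w ∈ R)
    (h : G.Adj u w) : w ∈ G.ballWithin R v (k + 1) :=
  Or.inr ⟨hw, u, hu, h⟩

theorem ballWithin_subset (hv : v ∈ R) : ∀ k, G.ballWithin R v k ⊆ R
  | 0 => Set.singleton_subset_iff.2 hv
  | k + 1 => Set.union_subset (ballWithin_subset hv k) fun _ hu => hu.1

def InducedDiamLE (G : SimpleGraph V) (B : Set V) (β : ℕ) : Prop :=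
  ∀ u w : ((⊤ : G.Subgraph).induce B).verts,
    ∃ p : ((⊤ : G.Subgraph).induce B).coe.Walk u w, p.length ≤ β

theorem exists_walk_in_ballWithin {k r : ℕ} (hkr : k ≤ r) {u : V}
    (hu : u ∈ G.ballWithin R v k) :
    ∃ p : ((⊤ : G.Subgraph).induce (G.ballWithin R v r)).coe.Walk
      ⟨v, mem_ballWithin_self r⟩ ⟨u, ballWithin_mono hkr hu⟩, p.length ≤ k := by
  induction k generalizing u with
  | zero =>
    obtain rfl : u = v := hu
    exact ⟨.nil, le_rfl⟩
  | succ k ih =>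
    rcases hu with hu | ⟨huR, w, hw, hwu⟩
    · obtain ⟨p, hp⟩ := ih (by omega) hu
      exact ⟨p, by omega⟩
    · obtain ⟨p, hp⟩ := ih (by omega) hw
      have hw' := ballWithin_mono (show k ≤ r by omega) hw
      have hu' := ballWithin_mono hkr (mem_ballWithin_succ_of_adj hw huR hwu)
      have hadj : ((⊤ : G.Subgraph).induce (G.ballWithin R v r)).coe.Adj ⟨w, hw'⟩ ⟨u, hu'⟩ :=
        ⟨hw', hu', hwu⟩
      exact ⟨p.concat hadj, by simpa using hp⟩

theorem inducedDiamLE_ballWithin {r β : ℕ} (hβ : 2 * r ≤ β) :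
    G.InducedDiamLE (G.ballWithin R v r) β := by
  rintro ⟨u, hu⟩ ⟨w, hw⟩
  obtain ⟨p, hp⟩ := exists_walk_in_ballWithin le_rfl hu
  obtain ⟨q, hq⟩ := exists_walk_in_ballWithin le_rfl hw
  exact ⟨p.reverse.append q, by simp only [Walk.length_append, Walk.length_reverse]; omega⟩

end SimpleGraph

theorem exists_lt_succ_le_mul {f : ℕ → ℕ} {q : ℝ} {N t : ℕ} (hq : 0 ≤ q) (hf0 : 1 ≤ f 0)
    (hfN : ∀ k, f k ≤ N) (hN : N < q ^ t) : ∃ r < t, (f (r + 1) : ℝ) ≤ q * f r := by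
  by_contra! hgrow
  have hpow : ∀ k ≤ t, q ^ k ≤ f k := by
    intro k hk
    induction k with
    | zero => simpa using hf0
    | succ k ih =>
      calc q ^ (k + 1) = q ^ k * q := pow_succ q k
        _ ≤ f k * q := mul_le_mul_of_nonneg_right (ih (by omega)) hq
        _ ≤ f (k + 1) := by linarith [hgrow k (by omega)]
  have := (hpow t le_rfl).trans (Nat.cast_le.2 (hfN t))
  linarith

/-- A carving of the region `R`: its clusters are the traces `S ∩ ball i`, and the pairwise
disjoint balls carry the Steiner trees. -/
structure Carving (G : SimpleGraph V) (S R : Set V) (β : ℕ) (ε : ℝ) where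
  p : ℕ
  ball : Fin p → Set V
  ball_subset : ∀ i, ball i ⊆ R
  pairwise_disjoint : Pairwise fun i j => Disjoint (ball i) (ball j)
  farApart : Pairwise fun i j => FarApart G 1 (S ∩ ball i) (S ∩ ball j)
  diam_le : ∀ i, G.InducedDiamLE (ball i) β
  coverage : (1 - ε) * (S ∩ R).ncard ≤ (S ∩ ⋃ i, ball i).ncard

namespace Carving

variable {S R B B₁ : Set V} {β : ℕ} {ε : ℝ}

def nil (h : S ∩ R = ∅) : Carving G S R β ε where
  p := 0
  ball := Fin.elim0
  ball_subset i := i.elim0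
  pairwise_disjoint i := i.elim0
  farApart i := i.elim0
  diam_le i := i.elim0
  coverage := by simp [h]

variable [Finite V]

def cons (c : Carving G S (R \ B₁) β ε) (hBB₁ : B ⊆ B₁) (hB₁R : B₁ ⊆ R)
    (hnbr : ∀ a ∈ B, ∀ b ∈ R, G.Adj a b → b ∈ B₁) (hB : G.InducedDiamLE B β)
    (hgrowth : ((S ∩ B₁).ncard : ℝ) ≤ (1 + ε) * (S ∩ B).ncard) : Carving G S R β ε where
  p := c.p + 1
  ball := Fin.cons B c.ball
  ball_subset :=
    Fin.cases (hBB₁.trans hB₁R) fun i => (c.ball_subset i).trans Set.sdiff_subset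
  pairwise_disjoint := Fin.pairwise_cons_of_symm (fun _ _ h => h.symm)
    (fun i => Set.disjoint_of_subset_left hBB₁ (Set.subset_sdiff.1 (c.ball_subset i)).2.symm)
    c.pairwise_disjoint
  farApart := Fin.pairwise_cons_of_symm (r := fun X Y => FarApart G 1 (S ∩ X) (S ∩ Y))
    (fun _ _ h => h.symm) (fun i => by
      have hi := Set.subset_sdiff.1 (c.ball_subset i)
      refine farApart_one_iff.2 ⟨?_, fun a ha b hb hab => ?_⟩
      · exact (Set.disjoint_of_subset_left hBB₁ hi.2.symm).mono Set.inter_subset_right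
          Set.inter_subset_right
      · exact Set.disjoint_left.1 hi.2 hb.2 (hnbr a ha.2 b (hi.1 hb.2) hab))
    c.farApart
  diam_le := Fin.cases hB c.diam_le
  coverage := by
    have hsplit : ((S ∩ R).ncard : ℝ) ≤ (S ∩ B₁).ncard + (S ∩ (R \ B₁)).ncard := by
      rw [← Nat.cast_add, ← Set.ncard_union_eq (by tauto_set)]
      exact_mod_cast Set.ncard_le_ncard (by tauto_set)
    have hU : Disjoint B (⋃ i, c.ball i) :=
      Set.disjoint_iUnion_right.2 fun i =>
        Set.disjoint_of_subset_left hBB₁ (Set.subset_sdiff.1 (c.ball_subset i)).2.symm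
    rw [Set.iUnion_cons, Set.inter_union_distrib_left,
      Set.ncard_union_eq (hU.mono Set.inter_subset_right Set.inter_subset_right)]
    have := c.coverage
    push_cast
    rcases le_or_gt ε 1 with hε | hε
    · nlinarith [mul_le_mul_of_nonneg_left hsplit (sub_nonneg.2 hε),
        mul_le_mul_of_nonneg_left hgrowth (sub_nonneg.2 hε), sq_nonneg ε]
    · nlinarith

end Carving

theorem nonempty_carving [Finite V] (S : Set V) {ε : ℝ} (hε : 0 ≤ ε) {t β : ℕ}
    (hβ : 2 * t ≤ β) (ht : (Nat.card V : ℝ) < (1 + ε) ^ t) (R : Set V) :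
    Nonempty (Carving G S R β ε) := by
  rcases (S ∩ R).eq_empty_or_nonempty with h | ⟨v, hvS, hvR⟩
  · exact ⟨.nil h⟩
  obtain ⟨r, hrt, hr⟩ := exists_lt_succ_le_mul (f := fun k => (S ∩ G.ballWithin R v k).ncard)
    (by linarith) ((Set.ncard_pos).2 ⟨v, hvS, mem_ballWithin_self 0⟩)
    (fun k => Set.ncard_le_card _) ht
  exact ⟨(nonempty_carving S hε hβ ht (R \ G.ballWithin R v (r + 1))).some.cons
    (ballWithin_mono r.le_succ) (ballWithin_subset hvR _)
    (fun a ha b hb hab => mem_ballWithin_succ_of_adj ha hb hab)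
    (inducedDiamLE_ballWithin (by omega)) hr⟩
termination_by R.ncard
decreasing_by
  exact Set.ncard_lt_ncard (Set.sdiff_ssubset_left_iff.2 ⟨v, hvR, mem_ballWithin_self _⟩)

theorem ncard_mem_edgeSet_le_one {ι : Type*} [Finite ι] {H : ι → G.Subgraph}
    (hH : Pairwise fun i j => Disjoint (H i).verts (H j).verts) (e : Sym2 V) :
    {i | e ∈ (H i).edgeSet}.ncard ≤ 1 := by
  refine (Set.ncard_le_one).2 fun i hi j hj => ?_
  by_contra hij
  induction e with
  | h a b => exact Set.disjoint_left.1 (hH hij) ((H i).edge_vert hi) ((H j).edge_vert hj)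

def ClusterCollection.ofCarving {S R : Set V} {β : ℕ} {ε : ℝ} (c : Carving G S R β ε) {κ : ℕ}
    (hκ : 1 ≤ κ) : ClusterCollection G β κ where
  p := c.p
  cluster i := S ∩ c.ball i
  tree i := (⊤ : G.Subgraph).induce (c.ball i)
  disjoint _ _ hij :=
    (c.pairwise_disjoint hij).mono Set.inter_subset_right Set.inter_subset_right
  subset_tree _ := Set.inter_subset_right
  connected i u w := (c.diam_le i u w).elim fun p _ => p.reachable
  radius := c.diam_le
  congestion e _ :=
    (ncard_mem_edgeSet_le_one (fun _ _ hij => c.pairwise_disjoint hij) e).trans hκ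

theorem two_le_one_add_inv_pow_ceil {x : ℝ} (hx : 1 ≤ x) : 2 ≤ (1 + 1 / x) ^ ⌈x⌉₊ := by
  have hceil : 1 ≤ ⌈x⌉₊ * (1 / x) := by
    rw [mul_one_div, one_le_div (by linarith)]
    exact Nat.le_ceil x
  have hinv : 0 ≤ 1 / x := by positivity
  linarith [one_add_mul_le_pow (show -2 ≤ 1 / x by linarith) ⌈x⌉₊]

theorem natCast_lt_one_add_inv_pow {x : ℝ} (hx : 1 ≤ x) (n : ℕ) :
    (n : ℝ) < (1 + 1 / x) ^ (⌈x⌉₊ * (Nat.log 2 n + 1)) :=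
  calc (n : ℝ) < 2 ^ (Nat.log 2 n + 1) := by
        exact_mod_cast Nat.lt_pow_succ_log_self one_lt_two n
    _ ≤ ((1 + 1 / x) ^ ⌈x⌉₊) ^ (Nat.log 2 n + 1) :=
      pow_le_pow_left₀ zero_le_two (two_le_one_add_inv_pow_ceil hx) _
    _ = (1 + 1 / x) ^ (⌈x⌉₊ * (Nat.log 2 n + 1)) := (pow_mul _ _ _).symm

theorem two_mul_ceil_mul_succ_log_le {x : ℝ} (hx : 1 ≤ x) {n : ℕ} (hn : 2 ≤ n) :
    ((2 * (⌈x⌉₊ * (Nat.log 2 n + 1)) : ℕ) : ℝ) ≤ 8 * x * Real.logb 2 n ^ 2 := by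
  have hlog : 1 ≤ Real.logb 2 n := by
    rw [Real.le_logb_iff_rpow_le one_lt_two (by positivity)]
    exact_mod_cast (by simpa using hn : (2 : ℝ) ≤ n)
  have hceil : (⌈x⌉₊ : ℝ) ≤ 2 * x := by linarith [Nat.ceil_lt_add_one (by linarith : 0 ≤ x)]
  have hL : (Nat.log 2 n : ℝ) + 1 ≤ 2 * Real.logb 2 n ^ 2 := by
    have := Real.natLog_le_logb n 2
    push_cast at this
    nlinarith
  push_cast
  nlinarith [mul_le_mul hceil hL (by positivity) (by positivity)]

end BallCarving

theorem statement4 :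
    ∃ c₁ c₂ : ℝ, 0 < c₁ ∧ 0 < c₂ ∧
      ∀ (n : ℕ), 2 ≤ n →
      ∀ (V : Type) [Fintype V] (G : SimpleGraph V),
        Fintype.card V ≤ n →
        ∀ S : Set V, ∀ x : ℝ, 1 ≤ x →
          ∃ CC : ClusterCollection G
              ⌈c₁ * x * (Real.logb 2 n) ^ 2⌉₊
              ⌈c₂ * Real.logb 2 n⌉₊,
            (∀ i, CC.cluster i ⊆ S) ∧
            ((1 - 1 / x) * S.ncard ≤ ((⋃ i, CC.cluster i).ncard : ℝ)) ∧
            (∀ i j, i ≠ j → FarApart G 1 (CC.cluster i) (CC.cluster j)) := by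
  refine ⟨8, 1, by norm_num, by norm_num, fun n hn V _ G hV S x hx => ?_⟩
  have hcard : (Nat.card V : ℝ) < (1 + 1 / x) ^ (⌈x⌉₊ * (Nat.log 2 n + 1)) := by
    rw [Nat.card_eq_fintype_card]
    exact (Nat.cast_le.2 hV).trans_lt (natCast_lt_one_add_inv_pow hx n)
  have hβ : 2 * (⌈x⌉₊ * (Nat.log 2 n + 1)) ≤ ⌈8 * x * Real.logb 2 n ^ 2⌉₊ :=
    Nat.cast_le.1 ((two_mul_ceil_mul_succ_log_le hx hn).trans (Nat.le_ceil _))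
  have hκ : 1 ≤ ⌈1 * Real.logb 2 n⌉₊ :=
    Nat.one_le_ceil_iff.2 (by simpa using Real.logb_pos one_lt_two (by exact_mod_cast hn))
  obtain ⟨c⟩ := nonempty_carving (G := G) S (by positivity) hβ hcard Set.univ
  refine ⟨.ofCarving c hκ, fun i => Set.inter_subset_left, ?_, fun i j hij => c.farApart hij⟩
  have hcov := c.coverage
  rwa [Set.inter_univ, Set.inter_iUnion] at hcov
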